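/- Let Y be a topological space equipped with a family of pairwise disjoint subsets Y_i (i ∈ I) such that Y = ⊔_{i∈I} Y_i, and such that whenever a sequence {y_n} in Y converges to a point y ∈ Y_i, then y_n ∈ Y_i for all sufficiently large n. Let Z be a topological space of class 𝒞 and let F : Z → Y be a continuous mapping. If z ∈ Z and F(z) ∈ Y_i, then F(Z) ⊆ Y_i. -/

import Mathlib

set_option synthInstance.maxHeartbeats 1000000
set_option maxHeartbeats 2000000

noncomputable section

open scoped Classical

/-- A topological space `Z` is of class `𝒞` if each pair of points of `Z` belongs to the image
of a continuous mapping from a nonempty connected first-countable `T1` space to `Z`. -/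
def IsClassC (Z : Type*) [TopologicalSpace Z] : Prop :=
  ∀ z₁ z₂ : Z, ∃ (W : Type) (_ : TopologicalSpace W), Nonempty W ∧ ConnectedSpace W ∧
    FirstCountableTopology W ∧ T1Space W ∧
      ∃ g : W → Z, Continuous g ∧ z₁ ∈ Set.range g ∧ z₂ ∈ Set.range g

/-!
Pull the pieces `Y i` back along a continuous map `h : W → Y` from a connected first-countable
space. Since `W` is sequential, the sequence condition makes every preimage `h⁻¹ (Y i)` open; as
these preimages partition `W`, each is also closed, so a nonempty one is all of `W`. Points
`z, z'` of a class `𝒞` space lie on a common such `W`, so `F z` and `F z'` lie in the same piece.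
-/

open Set Filter Topology Function

theorem isOpen_preimage_of_tendsto_eventually_mem {X Y : Type*} [TopologicalSpace X]
    [SequentialSpace X] [TopologicalSpace Y] {f : X → Y} (hf : Continuous f) {s : Set Y}
    (hs : ∀ (u : ℕ → Y) (y : Y), Tendsto u atTop (𝓝 y) → y ∈ s → ∀ᶠ n in atTop, u n ∈ s) :
    IsOpen (f ⁻¹' s) := by
  refine isClosed_compl_iff.mp (IsSeqClosed.isClosed fun u x hu hux hx => ?_)
  obtain ⟨n, hn⟩ := (hs _ _ ((hf.tendsto x).comp hux) hx).exists
  exact hu n hn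

theorem isClopen_of_pairwise_disjoint_of_isOpen {X ι : Type*} [TopologicalSpace X]
    {s : ι → Set X} (hdisj : Pairwise (Disjoint on s)) (hcover : ⋃ i, s i = univ)
    (hopen : ∀ i, IsOpen (s i)) (i : ι) : IsClopen (s i) := by
  refine ⟨?_, hopen i⟩
  rw [← isOpen_compl_iff, compl_eq_univ_sdiff, ← hcover, iUnion_sdiff]
  refine isOpen_iUnion fun j => ?_
  rcases eq_or_ne i j with rfl | hij
  · simp
  · simpa only [(hdisj hij.symm).sdiff_eq_left] using hopen j

theorem mem_of_mem_of_connectedSpace {W Y ι : Type*} [TopologicalSpace W] [ConnectedSpace W]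
    [SequentialSpace W] [TopologicalSpace Y] {s : ι → Set Y}
    (hdisj : Pairwise (Disjoint on s)) (hcover : ⋃ i, s i = univ)
    (hs : ∀ (u : ℕ → Y) (y : Y) (i : ι), Tendsto u atTop (𝓝 y) → y ∈ s i →
      ∀ᶠ n in atTop, u n ∈ s i)
    {h : W → Y} (hh : Continuous h) {i : ι} {w : W} (hw : h w ∈ s i) (w' : W) :
    h w' ∈ s i := by
  have hclopen : IsClopen (h ⁻¹' s i) :=
    isClopen_of_pairwise_disjoint_of_isOpen (s := fun j => h ⁻¹' s j)
      (fun j k hjk => (hdisj hjk).preimage h) (by rw [← preimage_iUnion, hcover, preimage_univ])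
      (fun j => isOpen_preimage_of_tendsto_eventually_mem hh (hs · · j)) i
  exact show w' ∈ h ⁻¹' s i from hclopen.eq_univ ⟨w, hw⟩ ▸ mem_univ w'

/-- Proposition 2.1: if `Y` is the disjoint union of subsets `Y i` such that any convergent
sequence with limit in `Y i` eventually lies in `Y i`, `Z` is of class `𝒞`, and `F : Z → Y`
is continuous with `F z ∈ Y i`, then `F(Z) ⊆ Y i`. -/
theorem statement0 {Y : Type*} [TopologicalSpace Y] {I : Type*} (Yi : I → Set Y)
    (hdisj : ∀ i j : I, i ≠ j → Disjoint (Yi i) (Yi j))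
    (hcover : (⋃ i, Yi i) = Set.univ)
    (hconv : ∀ (u : ℕ → Y) (y : Y) (i : I), Filter.Tendsto u Filter.atTop (nhds y) →
      y ∈ Yi i → ∀ᶠ n in Filter.atTop, u n ∈ Yi i)
    {Z : Type*} [TopologicalSpace Z] (hZ : IsClassC Z)
    (F : Z → Y) (hF : Continuous F) (z : Z) (i : I) (hz : F z ∈ Yi i) :
    Set.range F ⊆ Yi i := by
  rintro _ ⟨z', rfl⟩
  obtain ⟨W, _, -, _, _, -, g, hg, ⟨w, rfl⟩, ⟨w', rfl⟩⟩ := hZ z z'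
  exact mem_of_mem_of_connectedSpace (h := F ∘ g) hdisj hcover hconv (hF.comp hg) hz w'
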